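/- Full-bunching ratio theorem: Fix an m × m unitary U, an output mode j, and an input configuration given by occupation numbers g : Fin m → ℕ with ∑_k g_k = n. Let r : Fin n → Fin m be the nondecreasing list in which each index k appears g_k times. Define the quantum full-bunching probability q_q = |per(A)|² / (n! ∏_k g_k!) where A_{i,k} = U_{j, r(k)}, and the classical full-bunching probability q_c = per(B)/n! where B_{i,k} = |U_{j,r(k)}|². If q_c ≠ 0, then q_q / q_c = n! / ∏_k g_k!. -/

import Mathlib

/-!
All rows of `A` equal the same vector, so each of the `n!` terms of the permanent is the
same product: `per A = n! x` and `per B = n! |x|²` with `x = ∏ₖ U j (r k)`.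
-/

open Finset

/-- The permanent of an `n × n` complex matrix. -/
noncomputable def perm {n : ℕ} (A : Matrix (Fin n) (Fin n) ℂ) : ℂ :=
  ∑ σ : Equiv.Perm (Fin n), ∏ i, A i (σ i)

/-- The permanent of an `n × n` real matrix. -/
def permR {n : ℕ} (B : Matrix (Fin n) (Fin n) ℝ) : ℝ :=
  ∑ σ : Equiv.Perm (Fin n), ∏ i, B i (σ i)

theorem Equiv.Perm.sum_prod_apply {R ι : Type*} [CommSemiring R] [Fintype ι] [DecidableEq ι]
    (v : ι → R) : ∑ σ : Equiv.Perm ι, ∏ i, v (σ i) = (Fintype.card ι).factorial * ∏ i, v i := by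
  simp only [Equiv.prod_comp, sum_const, card_univ, Fintype.card_perm, nsmul_eq_mul]

theorem perm_of_rows_eq {n : ℕ} {A : Matrix (Fin n) (Fin n) ℂ} {v : Fin n → ℂ}
    (hA : ∀ i k, A i k = v k) : perm A = n.factorial * ∏ k, v k := by
  simp only [perm, hA, Equiv.Perm.sum_prod_apply, Fintype.card_fin]

theorem permR_of_rows_eq {n : ℕ} {B : Matrix (Fin n) (Fin n) ℝ} {v : Fin n → ℝ}
    (hB : ∀ i k, B i k = v k) : permR B = n.factorial * ∏ k, v k := by
  simp only [permR, hB, Equiv.Perm.sum_prod_apply, Fintype.card_fin]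

theorem full_bunching_ratio_general (m n : ℕ) (U : Matrix (Fin m) (Fin m) ℂ)
    (j : Fin m) (g : Fin m → ℕ)
    (r : Fin n → Fin m)
    (A : Matrix (Fin n) (Fin n) ℂ) (hA : ∀ i k, A i k = U j (r k))
    (B : Matrix (Fin n) (Fin n) ℝ) (hB : ∀ i k, B i k = ‖U j (r k)‖ ^ 2)
    (qq qc : ℝ)
    (hqq : qq = ‖perm A‖ ^ 2 / ((n.factorial : ℝ) * ∏ k, ((g k).factorial : ℝ)))
    (hqc : qc = permR B / (n.factorial : ℝ))
    (hqc0 : qc ≠ 0) :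
    qq / qc = (n.factorial : ℝ) / ∏ k, ((g k).factorial : ℝ) := by
  have hn : (n.factorial : ℝ) ≠ 0 := by positivity
  have hqc_eq : qc = ‖∏ k, U j (r k)‖ ^ 2 := by
    rw [hqc, permR_of_rows_eq hB, norm_prod, ← prod_pow, mul_div_cancel_left₀ _ hn]
  have hqq_eq : qq = n.factorial * ‖∏ k, U j (r k)‖ ^ 2 / ∏ k, ((g k).factorial : ℝ) := by
    rw [hqq, perm_of_rows_eq hA, norm_mul, Complex.norm_natCast]
    field_simp
  rw [hqq_eq, hqc_eq, mul_div_right_comm, mul_div_cancel_right₀ _ (hqc_eq ▸ hqc0)]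

/-- **Full-bunching ratio theorem.** With occupation numbers `g` summing to `n`,
`r` listing mode `k` with multiplicity `g k` (nondecreasingly),
quantum probability `q_q = |per A|²/(n! ∏ₖ g_k!)` with `A i k = U j (r k)`, and
classical probability `q_c = per B / n!` with `B i k = |U j (r k)|²`:
if `q_c ≠ 0` then `q_q / q_c = n! / ∏ₖ g_k!`. -/
theorem full_bunching_ratio (m n : ℕ) (U : Matrix (Fin m) (Fin m) ℂ)
    (j : Fin m) (g : Fin m → ℕ) (hg : ∑ k, g k = n)
    (r : Fin n → Fin m) (hmono : Monotone r)
    (hr : ∀ i : Fin m, (Finset.univ.filter (fun k => r k = i)).card = g i)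
    (A : Matrix (Fin n) (Fin n) ℂ) (hA : ∀ i k, A i k = U j (r k))
    (B : Matrix (Fin n) (Fin n) ℝ) (hB : ∀ i k, B i k = ‖U j (r k)‖ ^ 2)
    (qq qc : ℝ)
    (hqq : qq = ‖perm A‖ ^ 2 / ((n.factorial : ℝ) * ∏ k, ((g k).factorial : ℝ)))
    (hqc : qc = permR B / (n.factorial : ℝ))
    (hqc0 : qc ≠ 0) :
    qq / qc = (n.factorial : ℝ) / ∏ k, ((g k).factorial : ℝ) :=
  full_bunching_ratio_general m n U j g r A hA B hB qq qc hqq hqc hqc0
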